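/- Let E be a finite-dimensional real inner product space, let f : E → ℝ be twice continuously differentiable, and let x̂ ∈ E satisfy ∇f(x̂) = 0 and f''(x̂)(y, y) > 0 for all y ≠ 0 (x̂ is a local minimum at which f is strongly convex). Then there exist r > 0, C ≥ 0 and θ ∈ (0, 1) such that for every x₀ with ‖x₀ − x̂‖ < r, the gradient descent sequence with Newton step size, defined by x_{k+1} = x_k − (‖∇f(x_k)‖² / f''(x_k)(∇f(x_k), ∇f(x_k))) ∇f(x_k) when ∇f(x_k) ≠ 0 and x_{k+1} = x_k otherwise, is well defined (in particular f''(x_k)(∇f(x_k), ∇f(x_k)) > 0 whenever ∇f(x_k) ≠ 0), remains in the ball of radius r around x̂, and satisfies ‖x_k − x̂‖ ≤ C θ^k ‖x₀ − x̂‖ for all k; in particular x_k → x̂. -/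

import Mathlib

/-! Let `B = f''(x̂)`, coercive with constant `m` and bounded by `M`. Near `x̂`, `f''(y)` is
`δ`-close to `B` and `∇f(y)` is `δ‖e‖`-close to `B e`, where `e = y - x̂`. For `g = ∇f(y)` the
step size `t = ‖g‖² / f''(y)(g, g)` lies in `[1/2M, 2/m]`, and expanding
`0 ≤ B (e - t g) (e - t g)` gives `t‖g‖² ≤ B(e, e) + O(δ)‖e‖²`, while `⟪e, g⟫ ≥ B(e, e) - δ‖e‖²`.
Hence `‖e - t g‖² = ‖e‖² - 2t⟪e, g⟫ + t · t‖g‖² ≤ (1 - m/4M)‖e‖²` once `δ ≤ m³/64M²`,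
so the iteration is a contraction towards `x̂` on a small ball. -/

open scoped Classical

open InnerProductSpace Metric Filter Topology

theorem le_one_sub_mul_of_sq_le {a b q : ℝ} (hb : 0 ≤ b) (hq : q ≤ 1)
    (h : a ^ 2 ≤ (1 - 2 * q) * b ^ 2) : a ≤ (1 - q) * b := by
  have hsq : a ^ 2 ≤ ((1 - q) * b) ^ 2 := by nlinarith [sq_nonneg (q * b)]
  exact (le_abs_self a).trans (abs_le_of_sq_le_sq hsq (by nlinarith))

theorem mul_two_sq_add_le_half_mul_sq {m M δ s x : ℝ} (hm : 0 < m) (hmM : m ≤ M) (hδ0 : 0 ≤ δ)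
    (hδ : δ ≤ m ^ 3 / (64 * M ^ 2)) (hs : 0 ≤ s) (hx0 : 0 ≤ x) (hx : x ≤ 4 * M / m * s) :
    δ * (2 * s ^ 2 + 2 * s * x + x ^ 2) ≤ m / 2 * s ^ 2 := by
  have hM : 0 < M := hm.trans_le hmM
  set κ := 4 * M / m
  have hκ : 4 ≤ κ := by rw [le_div_iff₀ hm]; linarith
  have hδκ : δ * κ ^ 2 ≤ m / 4 := by
    calc δ * κ ^ 2 ≤ m ^ 3 / (64 * M ^ 2) * κ ^ 2 := by gcongr
      _ = m / 4 := by simp only [κ]; field_simp; ring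
  have hquad : 2 * s ^ 2 + 2 * s * x + x ^ 2 ≤ 13 / 8 * κ ^ 2 * s ^ 2 := by
    have hsq : x ^ 2 ≤ (κ * s) ^ 2 := by gcongr
    have hlin : (2 + 2 * κ) * s ^ 2 ≤ 5 / 8 * κ ^ 2 * s ^ 2 := by
      gcongr
      nlinarith
    nlinarith [mul_le_mul_of_nonneg_left hx hs]
  calc _ ≤ δ * (13 / 8 * κ ^ 2 * s ^ 2) := by gcongr
    _ = 13 / 8 * (δ * κ ^ 2) * s ^ 2 := by ring
    _ ≤ 13 / 8 * (m / 4) * s ^ 2 := by gcongr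
    _ ≤ m / 2 * s ^ 2 := by nlinarith [sq_nonneg s]

theorem norm_sub_smul_sq_le {E : Type*} [NormedAddCommGroup E] [InnerProductSpace ℝ E]
    {e g : E} {t a ε ε' : ℝ} (ht : 0 ≤ t) (hinner : a - ε ≤ ⟪e, g⟫_ℝ)
    (hstep : t * ‖g‖ ^ 2 ≤ a + ε') :
    ‖e - t • g‖ ^ 2 ≤ ‖e‖ ^ 2 - t * (a - 2 * ε - ε') := by
  have hexpand : ‖e - t • g‖ ^ 2 = ‖e‖ ^ 2 - 2 * t * ⟪e, g⟫_ℝ + t * (t * ‖g‖ ^ 2) := by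
    rw [norm_sub_sq_real, real_inner_smul_right, norm_smul, Real.norm_of_nonneg ht]
    ring
  nlinarith [mul_le_mul_of_nonneg_left hinner ht, mul_le_mul_of_nonneg_left hstep ht]

theorem isCoercive_of_pos {E : Type*} [NormedAddCommGroup E] [NormedSpace ℝ E]
    [FiniteDimensional ℝ E] (B : E →L[ℝ] E →L[ℝ] ℝ) (hB : ∀ u, u ≠ 0 → 0 < B u u) :
    IsCoercive B := by
  rcases subsingleton_or_nontrivial E with hE | hE
  · exact ⟨1, one_pos, fun u => by simp [Subsingleton.elim u 0]⟩
  obtain ⟨u₀, hu₀, hmin⟩ := (isCompact_sphere (0 : E) 1).exists_isMinOn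
    (NormedSpace.sphere_nonempty.mpr zero_le_one)
    (B.continuous₂.comp₂ continuous_id continuous_id).continuousOn
  refine ⟨B u₀ u₀, hB u₀ (ne_zero_of_mem_unit_sphere ⟨u₀, hu₀⟩), fun u => ?_⟩
  rcases eq_or_ne u 0 with rfl | hu
  · simp
  set v := ‖u‖⁻¹ • u
  have hv : v ∈ sphere (0 : E) 1 := by simp [v, norm_smul, hu]
  have hu_eq : u = ‖u‖ • v := by simp [v, smul_smul, hu]
  calc B u₀ u₀ * ‖u‖ * ‖u‖ = ‖u‖ * ‖u‖ * B u₀ u₀ := by ring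
    _ ≤ ‖u‖ * ‖u‖ * B v v := by gcongr; exact hmin hv
    _ = B u u := by
      conv_rhs => rw [hu_eq]
      simp only [map_smul, smul_apply, smul_eq_mul]
      ring

section NewtonStep

variable {E : Type*} [NormedAddCommGroup E] [InnerProductSpace ℝ E]
  {B H : E →L[ℝ] E →L[ℝ] ℝ} {δ : ℝ} {e g : E}

theorem abs_inner_sub_apply_le (hg : ‖innerSL ℝ g - B e‖ ≤ δ * ‖e‖) (v : E) :
    |⟪g, v⟫_ℝ - B e v| ≤ δ * ‖e‖ * ‖v‖ := by
  rw [← innerSL_apply_apply, ← Real.norm_eq_abs, ← sub_apply]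
  exact (innerSL ℝ g - B e).le_of_opNorm_le hg v

theorem norm_le_of_norm_innerSL_sub_le (hg : ‖innerSL ℝ g - B e‖ ≤ δ * ‖e‖) :
    ‖g‖ ≤ (‖B‖ + δ) * ‖e‖ := by
  calc ‖g‖ = ‖innerSL ℝ g‖ := (innerSL_apply_norm ℝ g).symm
    _ ≤ ‖B e‖ + ‖innerSL ℝ g - B e‖ := norm_le_insert' _ _
    _ ≤ ‖B‖ * ‖e‖ + δ * ‖e‖ := add_le_add (B.le_opNorm e) hg
    _ = (‖B‖ + δ) * ‖e‖ := by ring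

theorem abs_apply_sub_apply_le (hH : ‖H - B‖ ≤ δ) (u : E) :
    |H u u - B u u| ≤ δ * ‖u‖ * ‖u‖ := by
  rw [← Real.norm_eq_abs]
  calc ‖H u u - B u u‖ = ‖(H - B) u u‖ := rfl
    _ ≤ ‖H - B‖ * ‖u‖ * ‖u‖ := (H - B).le_opNorm₂ u u
    _ ≤ δ * ‖u‖ * ‖u‖ := by gcongr

theorem mul_norm_sq_le_apply_add (hB_symm : ∀ u v, B u v = B v u)
    (hB_nonneg : ∀ u, 0 ≤ B u u) (hH : ‖H - B‖ ≤ δ) (hg : ‖innerSL ℝ g - B e‖ ≤ δ * ‖e‖)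
    {t : ℝ} (ht : 0 ≤ t) (htH : t * H g g = ‖g‖ ^ 2) :
    t * ‖g‖ ^ 2 ≤ B e e + δ * (2 * ‖e‖ * (t * ‖g‖) + (t * ‖g‖) ^ 2) := by
  have hpos := hB_nonneg (e - t • g)
  have hexpand : B (e - t • g) (e - t • g) = B e e - 2 * t * B e g + t ^ 2 * B g g := by
    simp only [map_sub, map_smul, sub_apply, smul_apply, smul_eq_mul, hB_symm g e]
    ring
  have heg : ‖g‖ ^ 2 - δ * ‖e‖ * ‖g‖ ≤ B e g := by
    have := abs_inner_sub_apply_le hg g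
    rw [real_inner_self_eq_norm_sq] at this
    linarith [(abs_le.mp this).2]
  have hgg : B g g ≤ H g g + δ * ‖g‖ * ‖g‖ := by
    linarith [(abs_le.mp (abs_apply_sub_apply_le hH g)).1]
  have h1 := mul_le_mul_of_nonneg_left heg (by positivity : 0 ≤ 2 * t)
  have h2 := mul_le_mul_of_nonneg_left hgg (by positivity : 0 ≤ t ^ 2)
  have h3 : t ^ 2 * H g g = t * ‖g‖ ^ 2 := by rw [sq t, mul_assoc, htH]
  linarith

variable {m M : ℝ}

theorem newtonStepSize_mem_Icc (hm : 0 < m) (hmM : m ≤ M) (hδ : δ ≤ m / 2)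
    (hB_coer : ∀ u, m * ‖u‖ * ‖u‖ ≤ B u u) (hB_norm : ‖B‖ ≤ M) (hH : ‖H - B‖ ≤ δ)
    (hg : g ≠ 0) :
    0 < H g g ∧ ‖g‖ ^ 2 / H g g ∈ Set.Icc (1 / (2 * M)) (2 / m) := by
  have hgg_norm : 0 < ‖g‖ := norm_pos_iff.mpr hg
  have hHB := abs_le.mp (abs_apply_sub_apply_le hH g)
  have hB_up : B g g ≤ M * ‖g‖ * ‖g‖ := by
    calc B g g ≤ ‖B g g‖ := Real.le_norm_self _
      _ ≤ ‖B‖ * ‖g‖ * ‖g‖ := B.le_opNorm₂ g g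
      _ ≤ M * ‖g‖ * ‖g‖ := by gcongr
  have hlow : m / 2 * ‖g‖ ^ 2 ≤ H g g := by nlinarith [hB_coer g]
  have hup : H g g ≤ 2 * M * ‖g‖ ^ 2 := by nlinarith
  have hpos : 0 < H g g := lt_of_lt_of_le (by positivity) hlow
  refine ⟨hpos, ?_, ?_⟩
  · rw [div_le_div_iff₀ (by linarith) hpos]
    linarith
  · rw [div_le_div_iff₀ hpos hm]
    linarith

theorem norm_sub_newtonStep_le (hm : 0 < m) (hmM : m ≤ M) (hδ : δ ≤ m ^ 3 / (64 * M ^ 2))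
    (hB_symm : ∀ u v, B u v = B v u) (hB_coer : ∀ u, m * ‖u‖ * ‖u‖ ≤ B u u)
    (hB_norm : ‖B‖ ≤ M) (hH : ‖H - B‖ ≤ δ) (hg : ‖innerSL ℝ g - B e‖ ≤ δ * ‖e‖) (he : e ≠ 0) :
    g ≠ 0 ∧ 0 < H g g ∧ ‖e - (‖g‖ ^ 2 / H g g) • g‖ ≤ (1 - m / (8 * M)) * ‖e‖ := by
  have hM : 0 < M := hm.trans_le hmM
  have hδ0 : 0 ≤ δ := (norm_nonneg (H - B)).trans hH
  have hδm : δ ≤ m / 64 := hδ.trans <| by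
    rw [div_le_div_iff₀ (by positivity) (by norm_num)]
    nlinarith [mul_le_mul hmM hmM hm.le hM.le]
  have he_norm : 0 < ‖e‖ := norm_pos_iff.mpr he
  have hinner : B e e - δ * ‖e‖ ^ 2 ≤ ⟪e, g⟫_ℝ := by
    have := abs_le.mp (abs_inner_sub_apply_le hg e)
    rw [real_inner_comm]
    linarith
  have hg0 : g ≠ 0 := by
    rintro rfl
    rw [inner_zero_right] at hinner
    nlinarith [hB_coer e, mul_pos (by linarith : 0 < m - δ) (mul_pos he_norm he_norm)]
  have hg_le : ‖g‖ ≤ 2 * M * ‖e‖ :=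
    (norm_le_of_norm_innerSL_sub_le hg).trans (by gcongr; linarith)
  obtain ⟨hQ, ht_low, ht_up⟩ :=
    newtonStepSize_mem_Icc hm hmM (by linarith) hB_coer hB_norm hH hg0
  refine ⟨hg0, hQ, ?_⟩
  set t := ‖g‖ ^ 2 / H g g
  have ht : 0 ≤ t := by positivity
  have hstep := mul_norm_sq_le_apply_add hB_symm
    (fun u => (by positivity : 0 ≤ m * ‖u‖ * ‖u‖).trans (hB_coer u)) hH hg ht
    (div_mul_cancel₀ _ hQ.ne')
  have hsmall := mul_two_sq_add_le_half_mul_sq hm hmM hδ0 hδ he_norm.le (by positivity)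
    (calc t * ‖g‖ ≤ 2 / m * (2 * M * ‖e‖) := by gcongr
      _ = 4 * M / m * ‖e‖ := by ring)
  have hsq : ‖e - t • g‖ ^ 2 ≤ (1 - 2 * (m / (8 * M))) * ‖e‖ ^ 2 := by
    calc ‖e - t • g‖ ^ 2
        ≤ ‖e‖ ^ 2 - t * (B e e - δ * (2 * ‖e‖ ^ 2 + 2 * ‖e‖ * (t * ‖g‖) + (t * ‖g‖) ^ 2)) := by
          convert norm_sub_smul_sq_le ht hinner hstep using 3; ring
      _ ≤ ‖e‖ ^ 2 - 1 / (2 * M) * (m / 2 * ‖e‖ ^ 2) := by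
          gcongr ‖e‖ ^ 2 - ?_
          exact mul_le_mul ht_low (by nlinarith [hB_coer e]) (by positivity) ht
      _ = (1 - 2 * (m / (8 * M))) * ‖e‖ ^ 2 := by field_simp; ring
  exact le_one_sub_mul_of_sq_le he_norm.le
    ((div_le_one (by positivity)).mpr (by linarith)) hsq

end NewtonStep

theorem ContDiff.exists_ball_norm_sub_fderiv_le {E F : Type*}
    [NormedAddCommGroup E] [NormedSpace ℝ E] [NormedAddCommGroup F] [NormedSpace ℝ F]
    {φ : E → F} (hφ : ContDiff ℝ 1 φ) (x : E) {δ : ℝ} (hδ : 0 < δ) :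
    ∃ r > 0, ∀ y ∈ ball x r, ‖fderiv ℝ φ y - fderiv ℝ φ x‖ ≤ δ ∧
      ‖φ y - φ x - fderiv ℝ φ x (y - x)‖ ≤ δ * ‖y - x‖ := by
  obtain ⟨r, hr, hcont⟩ :=
    Metric.continuousAt_iff.mp (hφ.continuous_fderiv one_ne_zero).continuousAt δ hδ
  have hnear : ∀ y ∈ ball x r, ‖fderiv ℝ φ y - fderiv ℝ φ x‖ ≤ δ := fun y hy => by
    rw [← dist_eq_norm]
    exact (hcont hy).le
  refine ⟨r, hr, fun y hy => ⟨hnear y hy, ?_⟩⟩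
  exact (convex_ball x r).norm_image_sub_le_of_norm_fderiv_le'
    (fun z _ => hφ.differentiable one_ne_zero z) hnear (mem_ball_self hr) hy

theorem tendsto_of_dist_le_mul_of_mem_ball {X : Type*} [PseudoMetricSpace X] {x : ℕ → X}
    {c : X} {r θ : ℝ} (hθ₀ : 0 ≤ θ) (hθ₁ : θ < 1)
    (hstep : ∀ k, x k ∈ ball c r → dist (x (k + 1)) c ≤ θ * dist (x k) c)
    (h₀ : x 0 ∈ ball c r) :
    (∀ k, x k ∈ ball c r) ∧ (∀ k, dist (x k) c ≤ θ ^ k * dist (x 0) c) ∧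
      Tendsto x atTop (𝓝 c) := by
  have hbound : ∀ k, dist (x k) c ≤ θ ^ k * dist (x 0) c ∧ x k ∈ ball c r := by
    intro k
    induction k with
    | zero => simpa using h₀
    | succ k ih =>
      have hle : dist (x (k + 1)) c ≤ θ ^ (k + 1) * dist (x 0) c := by
        calc dist (x (k + 1)) c ≤ θ * dist (x k) c := hstep k ih.2
          _ ≤ θ * (θ ^ k * dist (x 0) c) := by gcongr; exact ih.1
          _ = θ ^ (k + 1) * dist (x 0) c := by ring
      refine ⟨hle, mem_ball.mpr (hle.trans_lt ?_)⟩
      calc θ ^ (k + 1) * dist (x 0) c ≤ 1 * dist (x 0) c := by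
            gcongr; exact pow_le_one₀ hθ₀ hθ₁.le
        _ < r := by simpa using h₀
  refine ⟨fun k => (hbound k).2, fun k => (hbound k).1, ?_⟩
  refine tendsto_iff_dist_tendsto_zero.mpr
    (squeeze_zero (fun k => dist_nonneg) (fun k => (hbound k).1) ?_)
  simpa using (tendsto_pow_atTop_nhds_zero_of_lt_one hθ₀ hθ₁).mul_const (dist (x 0) c)

theorem exists_ball_newtonStep_contraction {E : Type*} [NormedAddCommGroup E]
    [InnerProductSpace ℝ E] [FiniteDimensional ℝ E] {f : E → ℝ} (hf : ContDiff ℝ 2 f)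
    {xhat : E} (hgrad : gradient f xhat = 0)
    (hpos : ∀ y : E, y ≠ 0 → 0 < fderiv ℝ (fderiv ℝ f) xhat y y) :
    ∃ r > (0 : ℝ), ∃ θ : ℝ, 0 < θ ∧ θ < 1 ∧ ∀ y ∈ ball xhat r, y ≠ xhat →
      gradient f y ≠ 0 ∧ 0 < fderiv ℝ (fderiv ℝ f) y (gradient f y) (gradient f y) ∧
      ‖y - (‖gradient f y‖ ^ 2 / fderiv ℝ (fderiv ℝ f) y (gradient f y) (gradient f y)) •
        gradient f y - xhat‖ ≤ θ * ‖y - xhat‖ := by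
  set B := fderiv ℝ (fderiv ℝ f) xhat
  have hB_symm : ∀ u v, B u v = B v u := hf.contDiffAt.isSymmSndFDerivAt (by simp)
  obtain ⟨m, hm, hB_coer⟩ := isCoercive_of_pos B hpos
  set M := max ‖B‖ m
  have hM : 0 < M := hm.trans_le (le_max_right _ _)
  obtain ⟨r, hr, hnear⟩ := (hf.fderiv_right (m := 1) (by norm_num)).exists_ball_norm_sub_fderiv_le
    xhat (δ := m ^ 3 / (64 * M ^ 2)) (by positivity)
  have hfderiv : fderiv ℝ f xhat = 0 := by simpa [gradient] using hgrad
  refine ⟨r, hr, 1 - m / (8 * M), ?_, ?_, fun y hy hne => ?_⟩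
  · rw [sub_pos, div_lt_one (by positivity)]
    linarith [le_max_right ‖B‖ m]
  · linarith [show 0 < m / (8 * M) by positivity]
  obtain ⟨hH, hlin⟩ := hnear y hy
  have hinner : innerSL ℝ (gradient f y) = fderiv ℝ f y := by
    ext v
    simp [gradient, toDual_symm_apply]
  rw [hfderiv, sub_zero, ← hinner] at hlin
  rw [sub_right_comm]
  exact norm_sub_newtonStep_le hm (le_max_right _ _) le_rfl hB_symm hB_coer (le_max_left _ _)
    hH hlin (sub_ne_zero.mpr hne)

theorem stmt3 {E : Type*}
    [NormedAddCommGroup E] [InnerProductSpace ℝ E] [FiniteDimensional ℝ E]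
    (f : E → ℝ) (hf : ContDiff ℝ 2 f) (xhat : E)
    (hgrad : gradient f xhat = 0)
    (hpos : ∀ y : E, y ≠ 0 → 0 < fderiv ℝ (fderiv ℝ f) xhat y y) :
    ∃ r > (0 : ℝ), ∃ C ≥ (0 : ℝ), ∃ θ : ℝ, 0 < θ ∧ θ < 1 ∧
      ∀ x₀ : E, ‖x₀ - xhat‖ < r →
        ∀ x : ℕ → E, x 0 = x₀ →
          (∀ k : ℕ, x (k + 1) =
            if gradient f (x k) = 0 then x k
            else x k - (‖gradient f (x k)‖ ^ 2 /
              fderiv ℝ (fderiv ℝ f) (x k) (gradient f (x k)) (gradient f (x k))) •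
                gradient f (x k)) →
          ((∀ k : ℕ, gradient f (x k) ≠ 0 →
              0 < fderiv ℝ (fderiv ℝ f) (x k) (gradient f (x k)) (gradient f (x k))) ∧
           (∀ k : ℕ, ‖x k - xhat‖ < r) ∧
           (∀ k : ℕ, ‖x k - xhat‖ ≤ C * θ ^ k * ‖x₀ - xhat‖) ∧
           Filter.Tendsto x Filter.atTop (nhds xhat)) := by
  obtain ⟨r, hr, θ, hθ₀, hθ₁, hcontract⟩ := exists_ball_newtonStep_contraction hf hgrad hpos
  refine ⟨r, hr, 1, zero_le_one, θ, hθ₀, hθ₁, fun x₀ hx₀ x hx0 hrec => ?_⟩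
  subst hx0
  have hstep : ∀ k, x k ∈ ball xhat r → dist (x (k + 1)) xhat ≤ θ * dist (x k) xhat := by
    intro k hk
    rw [dist_eq_norm, dist_eq_norm, hrec k]
    by_cases hk' : x k = xhat
    · simp [hk', hgrad]
    · obtain ⟨hg, -, hle⟩ := hcontract (x k) hk hk'
      rwa [if_neg hg]
  obtain ⟨hball, hbound, hlim⟩ :=
    tendsto_of_dist_le_mul_of_mem_ball hθ₀.le hθ₁ hstep (mem_ball_iff_norm.mpr hx₀)
  refine ⟨fun k hk => (hcontract (x k) (hball k) fun h => hk (h ▸ hgrad)).2.1,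
    fun k => mem_ball_iff_norm.mp (hball k), fun k => ?_, hlim⟩
  simpa [dist_eq_norm] using hbound k
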